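/- For all atoms p and all formulas φ not containing p: if φ is falsified at some world of some Kripke model M=(W,R,V), then τ_p(φ) is falsified at some world of a 2-dense Kripke model. Concretely, assuming W and R are disjoint as sets, the model M' with worlds W ∪ R, relation R' given by: t R' u iff tRu (for t,u ∈ W); t R' (u,v) iff t=u; (t,u) R' v iff u=v; (t,u) R' (v,w) iff t=v and u=w; valuation V'(q)=V(q) for q≠p and V'(p)=W, is a 2-dense model falsifying τ_p(φ) at the same world. -/
import Mathlib


inductive Formula where
  | atom : ℕ → Formula
  | bot : Formula
  | neg : Formula → Formula
  | and : Formula → Formula → Formula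
  | box : Formula → Formula
deriving DecidableEq

/-- Material implication `φ → ψ` as the abbreviation `¬(φ ∧ ¬ψ)`. -/
def Formula.impl (φ ψ : Formula) : Formula := .neg (.and φ (.neg ψ))

/-- Kripke truth: `truth R V w φ` means `(W,R,V), w ⊨ φ`. -/
def truth {W : Type*} (R : W → W → Prop) (V : ℕ → W → Prop) : W → Formula → Prop
  | w, .atom a => V a w
  | _, .bot => False
  | w, .neg φ => ¬ truth R V w φ
  | w, .and φ ψ => truth R V w φ ∧ truth R V w ψ
  | w, .box φ => ∀ w', R w w' → truth R V w' φ

/-- The relativization translation `τ_p`. -/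
def tau (p : ℕ) : Formula → Formula
  | .atom q => .atom q
  | .bot => .bot
  | .neg φ => .neg (tau p φ)
  | .and φ ψ => .and (tau p φ) (tau p ψ)
  | .box φ => .box ((Formula.atom p).impl (tau p φ))

/-- `occurs p φ`: the atom `p` occurs in `φ`. -/
def occurs (p : ℕ) : Formula → Prop
  | .atom q => q = p
  | .bot => False
  | .neg φ => occurs p φ
  | .and φ ψ => occurs p φ ∨ occurs p ψ
  | .box φ => occurs p φ

/-- Worlds of the midpoint construction: `W ∪ R` (disjointly). -/
def midW (W : Type*) (R : W → W → Prop) : Type _ := W ⊕ {q : W × W // R q.1 q.2}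

/-- The relation `R'` of the midpoint construction. -/
def midR {W : Type*} (R : W → W → Prop) : midW W R → midW W R → Prop
  | Sum.inl t, Sum.inl u => R t u
  | Sum.inl t, Sum.inr q => t = q.val.1
  | Sum.inr q, Sum.inl v => q.val.2 = v
  | Sum.inr q, Sum.inr q' => q.val = q'.val

/-- The valuation `V'`: `V'(q) = V(q)` for `q ≠ p`, and `V'(p) = W`. -/
def midV {W : Type*} (R : W → W → Prop) (V : ℕ → W → Prop) (p : ℕ) :
    ℕ → midW W R → Prop :=
  fun q x => match x with
    | Sum.inl t => if q = p then True else V q t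
    | Sum.inr _ => False

def twoDense {α : Type*} (S : α → α → Prop) : Prop :=
  ∀ x y, S x y → ∃ z, S x z ∧ S z y

lemma tau_key (p : ℕ) {W : Type} (R : W → W → Prop) (V : ℕ → W → Prop) :
    ∀ ψ : Formula, ¬ occurs p ψ → ∀ t : W,
      (truth R V t ψ ↔ truth (midR R) (midV R V p) (Sum.inl t : midW W R) (tau p ψ)) := by
  intro ψ
  induction ψ with
  | atom q =>
      intro h t
      simp only [tau, truth, midV]
      rw [if_neg (by exact fun hq => h hq)]
  | bot => intro _ t; simp [tau, truth]
  | neg φ ih =>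
      intro h t
      simp only [tau, truth]
      exact not_congr (ih h t)
  | and φ ψ ihφ ihψ =>
      intro h t
      simp only [tau, truth]
      exact and_congr (ihφ (fun hh => h (Or.inl hh)) t) (ihψ (fun hh => h (Or.inr hh)) t)
  | box φ ih =>
      intro h t
      simp only [tau, truth, Formula.impl]
      constructor
      · intro H x hx
        match x with
        | Sum.inl u =>
            simp only [truth, midV, if_pos rfl, not_not]
            intro ⟨_, h2⟩
            exact h2 ((ih h u).mp (H u hx))
        | Sum.inr q =>
            simp only [truth, midV]
            intro ⟨h1, _⟩
            exact h1
      · intro H u hu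
        have := H (Sum.inl u) hu
        simp only [truth, midV, if_pos rfl, not_not] at this
        exact (ih h u).mpr (by
          by_contra hc
          exact this ⟨trivial, hc⟩)

/-- if `p` does not occur in `φ` and `φ` is falsified at `w` in
`M = (W,R,V)`, then the midpoint model `M' = (W ∪ R, R', V')` is a 2-dense
model falsifying `τ_p(φ)` at the same world `w`. -/
theorem tau_falsified_in_dense (p : ℕ) (φ : Formula) (hp : ¬ occurs p φ)
    (W : Type) (R : W → W → Prop) (V : ℕ → W → Prop) (w : W)
    (hw : ¬ truth R V w φ) :
    twoDense (midR R) ∧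
      ¬ truth (midR R) (midV R V p) (Sum.inl w : midW W R) (tau p φ) := by
  constructor
  · intro x y hxy
    match x, y with
    | Sum.inl t, Sum.inl u =>
        exact ⟨Sum.inr ⟨(t, u), hxy⟩, rfl, rfl⟩
    | Sum.inl t, Sum.inr q =>
        exact ⟨Sum.inr q, hxy, rfl⟩
    | Sum.inr q, Sum.inl v =>
        exact ⟨Sum.inr q, rfl, hxy⟩
    | Sum.inr q, Sum.inr q' =>
        exact ⟨Sum.inr q, rfl, hxy⟩
  · exact fun h => hw ((tau_key p R V φ hp w).mpr h)
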